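/- Let n ≥ 2 be an integer and let S be a finite set of primes. Let a_1, …, a_{n−1} be integers such that: a_1 is coprime to n, a_1 is divisible by n−1 and by every prime in S that does not divide n; and for each i with 2 ≤ i ≤ n−1, a_i is divisible by n! and by every prime in S. Then P_{a,0} has integer coefficients, and for every prime p such that p ∈ S or p divides n, the integer Δ_{a,1} is not divisible by p. -/

import Mathlib

/-
The coefficient of `x^i` in `Q_a = (n x - a₁)(x - a₂)⋯(x - a_{n-1})` is divisible by `i + 1`:
below the top two it is a multiple of `n!`, the coefficient of `x^{n-2}` is `≡ -a₁ (mod n!)`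
and `n - 1 ∣ a₁`, and the top one is `n`. So `P = P_{a,b}` is a monic integer polynomial.
If `P = ∏ (x - rᵢ)`, then `Δ(P) = ± ∏ P'(rᵢ) = ± ∏ Q_a(rᵢ) = ± n^n P(a₁/n) ∏_{k ≥ 2} P(a_k)`.
Modulo `p`, every `a_k` with `k ≥ 2` vanishes, so `P(a_k) ≡ P(0) = 1`; and
`n^n P(a₁/n) = ∑ c_j a₁^j n^{n-j}` is `≡ a₁^n` if `p ∣ n` and `≡ n^n` if `p ∣ a₁`.
-/

open Polynomial

/-- `Q_a(x) = n (x - a₁/n)(x - a₂) ⋯ (x - a_{n-1})`, where the tuple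
`(a₁, …, a_{n-1})` is given by the values `a 1, …, a (n-1)` of `a : ℕ → F`. -/
noncomputable def Qa (F : Type) [Field F] (n : ℕ) (a : ℕ → F) : Polynomial F :=
  C (n : F) * (X - C (a 1 / (n : F))) * ∏ i ∈ Finset.Icc 2 (n - 1), (X - C (a i))

/-- `P_{a,b}`: the unique polynomial with derivative `Q_a` and constant coefficient `b`
(in characteristic zero). -/
noncomputable def Pab (F : Type) [Field F] (n : ℕ) (a : ℕ → F) (b : F) : Polynomial F :=
  C b + ∑ i ∈ Finset.range ((Qa F n a).natDegree + 1),
    C ((Qa F n a).coeff i / ((i : F) + 1)) * X ^ (i + 1)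

/-- `Δ_{a,b} = z`: for some enumeration `r` of the complex roots of `P_{a,b}`,
`∏_{i<j} (rᵢ - rⱼ)² = z`. -/
def HasDisc (n : ℕ) (a : ℕ → ℚ) (b : ℚ) (z : ℤ) : Prop :=
  ∃ r : Fin n → ℂ, (Pab ℚ n a b).map (algebraMap ℚ ℂ) = ∏ i, (X - C (r i)) ∧
    (∏ i : Fin n, ∏ j ∈ Finset.Ioi i, (r i - r j) ^ 2) = (z : ℂ)

open Finset

theorem coeff_prod_X_sub_C_mem {R ι : Type*} [CommRing R] (I : Ideal R) (s : Finset ι)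
    (c : ι → R) (hc : ∀ i ∈ s, c i ∈ I) {j : ℕ} (hj : j < #s) :
    (∏ i ∈ s, (X - C (c i))).coeff j ∈ I := by
  rw [← Ideal.Quotient.eq_zero_iff_mem, ← coeff_map, Polynomial.map_prod,
    prod_congr rfl fun i hi => by
      rw [Polynomial.map_sub, map_X, map_C, Ideal.Quotient.eq_zero_iff_mem.mpr (hc i hi), C_0,
        sub_zero],
    prod_const, coeff_X_pow, if_neg hj.ne]

theorem exists_derivative_eq_of_dvd_coeff {R : Type*} [CommRing R] (Q : R[X])
    (hQ : ∀ i : ℕ, ((i : R) + 1) ∣ Q.coeff i) (b : R) :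
    ∃ P : R[X], derivative P = Q ∧ P.coeff 0 = b := by
  choose c hc using hQ
  refine ⟨C b + ∑ i ∈ range (Q.natDegree + 1), C (c i) * X ^ (i + 1), ?_, ?_⟩
  · conv_rhs => rw [Q.as_sum_range_C_mul_X_pow]
    simp only [derivative_add, derivative_C, zero_add, derivative_sum, derivative_C_mul_X_pow,
      Nat.cast_add_one, add_tsub_cancel_right]
    refine sum_congr rfl fun i _ => by rw [hc, mul_comm (c i)]
  · simp

theorem eq_of_derivative_eq_of_coeff_zero_eq {R : Type*} [CommRing R] [IsAddTorsionFree R]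
    {P P' : R[X]} (hd : derivative P = derivative P') (h0 : P.coeff 0 = P'.coeff 0) : P = P' := by
  have := eq_C_of_derivative_eq_zero (p := P - P') (by rw [derivative_sub, hd, sub_self])
  rwa [coeff_sub, h0, sub_self, C_0, sub_eq_zero] at this

theorem natDegree_eq_and_monic_of_derivative {R : Type*} [CommRing R] [IsDomain R] [CharZero R]
    {P : R[X]} {n : ℕ} (hn : n ≠ 0) (hdeg : (derivative P).natDegree = n - 1)
    (hlc : (derivative P).leadingCoeff = n) : P.natDegree = n ∧ P.Monic := by
  have hP : P.natDegree ≠ 0 := fun h => by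
    simp [derivative_eq_zero.mpr h, eq_comm, hn] at hlc
  rw [natDegree_derivative] at hdeg
  have hPn : P.natDegree = n := by omega
  refine ⟨hPn, ?_⟩
  rw [leadingCoeff_derivative, hPn] at hlc
  exact mul_eq_right₀ (by exact_mod_cast hn) |>.mp hlc

theorem exists_prod_X_sub_C_eq {K : Type*} [Field K] [IsAlgClosed K] {P : K[X]} (hP : P.Monic)
    {n : ℕ} (hn : P.natDegree = n) : ∃ r : Fin n → K, P = ∏ i, (X - C (r i)) := by
  subst hn
  classical
  have hcard : Fintype.card P.roots.ToType = P.natDegree := by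
    rw [Multiset.card_coe, (IsAlgClosed.splits P).natDegree_eq_card_roots]
  let e := (Fintype.equivFinOfCardEq hcard).symm
  refine ⟨fun i => e i, ?_⟩
  rw [Equiv.prod_comp e fun x => X - C (x : K), prod_eq_multiset_prod,
    Multiset.map_univ P.roots fun x => X - C x]
  exact (IsAlgClosed.splits P).eq_prod_roots_of_monic hP

theorem sum_card_Ioi_eq_choose_two (n : ℕ) : ∑ i : Fin n, #(Ioi i) = n.choose 2 := by
  simp only [Fin.card_Ioi]
  rw [Fin.sum_univ_eq_sum_range (fun i => n - 1 - i), sum_range_reflect (fun i => i) n,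
    sum_range_id, Nat.choose_two_right]

theorem eval_derivative_prod_X_sub_C {R ι : Type*} [CommRing R] [DecidableEq ι] {s : Finset ι}
    (r : ι → R) {k : ι} (hk : k ∈ s) :
    (derivative (∏ i ∈ s, (X - C (r i)))).eval (r k) = ∏ j ∈ s.erase k, (r k - r j) := by
  rw [derivative_prod_finset, eval_finsetSum, sum_eq_single_of_mem k hk]
  · simp [eval_prod]
  · intro i hi hik
    rw [eval_mul, eval_prod, prod_eq_zero (mem_erase.mpr ⟨hik.symm, hk⟩) (by simp), zero_mul]

theorem prod_prod_Ioi_sub_sq_eq_prod_eval_derivative {R : Type*} [CommRing R] {n : ℕ}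
    (r : Fin n → R) :
    ∏ i, ∏ j ∈ Ioi i, (r i - r j) ^ 2 =
      (-1) ^ n.choose 2 * ∏ i, (derivative (∏ j, (X - C (r j)))).eval (r i) := by
  classical
  have hoff : ∏ i, (derivative (∏ j, (X - C (r j)))).eval (r i) =
      ∏ i, ∏ j ∈ Ioi i, -(r i - r j) ^ 2 := by
    simp_rw [eval_derivative_prod_X_sub_C r (mem_univ _), ← compl_singleton,
      ← prod_prod_Ioi_mul_eq_prod_prod_off_diag fun j i => r i - r j]
    refine prod_congr rfl fun i _ => prod_congr rfl fun j _ => by ring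
  simp_rw [hoff, prod_neg, prod_mul_distrib, prod_pow_eq_pow_sum, sum_card_Ioi_eq_choose_two,
    ← mul_assoc, ← pow_add, Even.neg_one_pow ⟨_, rfl⟩, one_mul]

theorem prod_mul_sub_eq_eval_scaleRoots {K : Type*} [Field K] {n : ℕ} (r : Fin n → K) {u : K}
    (hu : u ≠ 0) (v : K) :
    ∏ i, (u * r i - v) = (-1) ^ n * ((∏ i, (X - C (r i))).scaleRoots u).eval v := by
  have h := scaleRoots_eval_mul (∏ i, (X - C (r i))) (v / u) u
  rw [mul_div_cancel₀ v hu, natDegree_finsetProd_X_sub_C_eq_card, card_univ, Fintype.card_fin,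
    eval_prod] at h
  rw [h, ← mul_assoc, ← mul_pow, ← Fin.prod_const, ← prod_mul_distrib]
  refine prod_congr rfl fun i _ => ?_
  simp only [eval_sub, eval_X, eval_C]
  field_simp
  ring

theorem prod_eval_linear_mul_prod_X_sub_C {K ι : Type*} [Field K] {n : ℕ} (r : Fin n → K)
    {u : K} (hu : u ≠ 0) (v : K) (s : Finset ι) (c : ι → K) :
    ∏ i, ((C u * X - C v) * ∏ k ∈ s, (X - C (c k))).eval (r i) =
      (-1) ^ n * ((∏ i, (X - C (r i))).scaleRoots u).eval v *
        ∏ k ∈ s, ((-1) ^ n * (∏ i, (X - C (r i))).eval (c k)) := by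
  simp only [eval_mul, eval_sub, eval_C, eval_X, eval_prod]
  rw [prod_mul_distrib, prod_comm (s := univ), prod_mul_sub_eq_eval_scaleRoots r hu]
  congr 1
  refine prod_congr rfl fun k _ => ?_
  simpa [eval_prod] using prod_mul_sub_eq_eval_scaleRoots r one_ne_zero (c k)

theorem derivative_Pab (F : Type) [Field F] [CharZero F] (n : ℕ) (a : ℕ → F) (b : F) :
    derivative (Pab F n a b) = Qa F n a := by
  rw [Pab, derivative_add, derivative_C, zero_add, derivative_sum]
  conv_rhs => rw [(Qa F n a).as_sum_range_C_mul_X_pow]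
  refine sum_congr rfl fun i _ => ?_
  rw [derivative_C_mul_X_pow, add_tsub_cancel_right, Nat.cast_add_one,
    div_mul_cancel₀ _ (Nat.cast_add_one_ne_zero i)]

theorem coeff_Pab_zero (F : Type) [Field F] (n : ℕ) (a : ℕ → F) (b : F) :
    (Pab F n a b).coeff 0 = b := by
  simp [Pab, finsetSum_coeff, coeff_X_pow]

noncomputable def intQ (n : ℕ) (a : ℕ → ℤ) : ℤ[X] :=
  (C (n : ℤ) * X - C (a 1)) * ∏ i ∈ Icc 2 (n - 1), (X - C (a i))

theorem map_intQ {K : Type*} [CommRing K] (n : ℕ) (a : ℕ → ℤ) :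
    (intQ n a).map (Int.castRingHom K) =
      (C (n : K) * X - C (a 1 : K)) * ∏ i ∈ Icc 2 (n - 1), (X - C (a i : K)) := by
  simp [intQ, Polynomial.map_prod]

theorem Qa_eq_map_intQ {n : ℕ} (hn : n ≠ 0) (a : ℕ → ℤ) :
    Qa ℚ n (fun i => (a i : ℚ)) = (intQ n a).map (Int.castRingHom ℚ) := by
  rw [map_intQ, Qa, mul_sub, ← C_mul, mul_div_cancel₀ _ (Nat.cast_ne_zero.mpr hn)]

theorem intQ_eq_linear_mul (n : ℕ) (a : ℕ → ℤ) :
    intQ n a = (C (n : ℤ) * X + C (-a 1)) * ∏ i ∈ Icc 2 (n - 1), (X - C (a i)) := by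
  rw [intQ, C_neg, ← sub_eq_add_neg]

theorem natDegree_intQ {n : ℕ} (hn : 2 ≤ n) (a : ℕ → ℤ) : (intQ n a).natDegree = n - 1 := by
  have hn0 : (n : ℤ) ≠ 0 := by omega
  have hlin : C (n : ℤ) * X + C (-a 1) ≠ 0 :=
    ne_zero_of_natDegree_gt (n := 0) (by rw [natDegree_linear hn0]; omega)
  rw [intQ_eq_linear_mul, natDegree_mul hlin (monic_prod_X_sub_C _ _).ne_zero,
    natDegree_linear hn0, natDegree_finsetProd_X_sub_C_eq_card, Nat.card_Icc]
  omega

theorem leadingCoeff_intQ {n : ℕ} (hn : n ≠ 0) (a : ℕ → ℤ) : (intQ n a).leadingCoeff = n := by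
  rw [intQ_eq_linear_mul, leadingCoeff_mul, leadingCoeff_linear (by omega),
    (monic_prod_X_sub_C _ _).leadingCoeff, mul_one]

theorem dvd_coeff_intQ {n : ℕ} (hn : 2 ≤ n) {a : ℕ → ℤ} (ha1 : (n : ℤ) - 1 ∣ a 1)
    (ha : ∀ i, 2 ≤ i → i ≤ n - 1 → (n.factorial : ℤ) ∣ a i) (i : ℕ) :
    ((i : ℤ) + 1) ∣ (intQ n a).coeff i := by
  set R := ∏ i ∈ Icc 2 (n - 1), (X - C (a i)) with hR
  have hRdeg : R.natDegree = n - 2 := by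
    rw [hR, natDegree_finsetProd_X_sub_C_eq_card, Nat.card_Icc]; omega
  have hRtop : R.coeff (n - 2) = 1 := hRdeg ▸ (monic_prod_X_sub_C _ _).coeff_natDegree
  have hRlow : ∀ j < n - 2, (n.factorial : ℤ) ∣ R.coeff j := fun j hj =>
    Ideal.mem_span_singleton.mp <| coeff_prod_X_sub_C_mem _ _ _
      (fun k hk => Ideal.mem_span_singleton.mpr (ha k (mem_Icc.1 hk).1 (mem_Icc.1 hk).2))
      (by rw [Nat.card_Icc]; omega)
  have hfac : ∀ j < n, ((j : ℤ) + 1) ∣ n.factorial := fun j hj => by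
    exact_mod_cast Nat.dvd_factorial (by omega) (by omega)
  rcases le_or_gt n i with hi | hi
  · rw [coeff_eq_zero_of_natDegree_lt (by rw [natDegree_intQ hn]; omega)]
    exact dvd_zero _
  have hcoeff : (intQ n a).coeff i = n * (X * R).coeff i - a 1 * R.coeff i := by
    rw [intQ, ← hR, sub_mul, mul_assoc, coeff_sub, coeff_C_mul, coeff_C_mul]
  rw [hcoeff]
  refine dvd_sub ?_ ?_
  · rcases i with _ | j
    · simp
    rw [coeff_X_mul]
    rcases lt_or_ge j (n - 2) with hj | hj
    · exact ((hfac _ hi).trans (hRlow j hj)).mul_left _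
    · rw [show ((j + 1 : ℕ) : ℤ) + 1 = n by omega]
      exact dvd_mul_right _ _
  · rcases lt_trichotomy i (n - 2) with hi' | rfl | hi'
    · exact ((hfac i hi).trans (hRlow i hi')).mul_left _
    · rw [hRtop, mul_one, show ((n - 2 : ℕ) : ℤ) + 1 = n - 1 by omega]
      exact ha1
    · rw [coeff_eq_zero_of_natDegree_lt (by omega), mul_zero]
      exact dvd_zero _

theorem Pab_eq_map {n : ℕ} (hn : n ≠ 0) {a : ℕ → ℤ} {P : ℤ[X]} (hP : derivative P = intQ n a) :
    Pab ℚ n (fun i => (a i : ℚ)) (P.coeff 0) = P.map (Int.castRingHom ℚ) := by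
  refine eq_of_derivative_eq_of_coeff_zero_eq ?_ ?_
  · rw [derivative_Pab, derivative_map, hP, Qa_eq_map_intQ hn]
  · rw [coeff_Pab_zero, coeff_map, eq_intCast]

-- `(P.scaleRoots n).eval (a 1)` is the integer `n ^ n * P (a₁ / n)`.
noncomputable def intDisc (n : ℕ) (a : ℕ → ℤ) (P : ℤ[X]) : ℤ :=
  (-1) ^ n.choose 2 * ((-1) ^ n * (P.scaleRoots n).eval (a 1) *
    ∏ k ∈ Icc 2 (n - 1), ((-1) ^ n * P.eval (a k)))

theorem hasDisc_intDisc {n : ℕ} (hn : n ≠ 0) {a : ℕ → ℤ} {P : ℤ[X]}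
    (hP : derivative P = intQ n a) (hmon : P.Monic) (hdeg : P.natDegree = n) :
    HasDisc n (fun i => (a i : ℚ)) (P.coeff 0) (intDisc n a P) := by
  obtain ⟨r, hr⟩ := exists_prod_X_sub_C_eq (hmon.map (Int.castRingHom ℂ))
    (by rw [natDegree_map_eq_of_injective Int.cast_injective, hdeg])
  refine ⟨r, ?_, ?_⟩
  · rw [Pab_eq_map hn hP, Polynomial.map_map,
      RingHom.ext_int ((algebraMap ℚ ℂ).comp (Int.castRingHom ℚ)) (Int.castRingHom ℂ), hr]
  · rw [prod_prod_Ioi_sub_sq_eq_prod_eval_derivative, ← hr, derivative_map, hP, map_intQ,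
      prod_eval_linear_mul_prod_X_sub_C r (Nat.cast_ne_zero.mpr hn), ← hr]
    have hs : (P.map (Int.castRingHom ℂ)).scaleRoots (n : ℂ) =
        (P.scaleRoots n).map (Int.castRingHom ℂ) := by
      rw [map_scaleRoots _ _ _ (by simp [hmon.leadingCoeff])]; simp
    simp [hs, intDisc, eval_intCast_map]

theorem intDisc_not_dvd {n p : ℕ} [Fact p.Prime] {a : ℕ → ℤ} {P : ℤ[X]} (hmon : P.Monic)
    (hP0 : P.coeff 0 = 1) (ha : ∀ k ∈ Icc 2 (n - 1), (p : ℤ) ∣ a k)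
    (ha1 : (p : ℤ) ∣ a 1 ↔ ¬ p ∣ n) : ¬ (p : ℤ) ∣ intDisc n a P := by
  have hmodp : ∀ x : ℤ, (p : ℤ) ∣ x ↔ (x : ZMod p) = 0 := fun x =>
    (ZMod.intCast_zmod_eq_zero_iff_dvd x p).symm
  have heval : ∀ (Q : ℤ[X]) (x : ℤ),
      ((Q.eval x : ℤ) : ZMod p) = (Q.map (Int.castRingHom (ZMod p))).eval (x : ZMod p) :=
    fun Q x => by rw [eval_intCast_map, eq_intCast, Int.cast_id]
  have hk : ∀ k ∈ Icc 2 (n - 1), ((P.eval (a k) : ℤ) : ZMod p) = 1 := fun k hk => by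
    rw [heval, (hmodp _).mp (ha k hk), ← coeff_zero_eq_eval_zero, coeff_map, hP0, map_one]
  have h1 : (((P.scaleRoots n).eval (a 1) : ℤ) : ZMod p) ≠ 0 := by
    rw [heval, map_scaleRoots _ _ _ (by simp [hmon.leadingCoeff])]
    by_cases hpn : p ∣ n
    · have hn : Int.castRingHom (ZMod p) n = 0 := by
        simpa using (ZMod.natCast_eq_zero_iff n p).mpr hpn
      have ha1' : (a 1 : ZMod p) ≠ 0 := by rw [Ne, ← hmodp, ha1, not_not]; exact hpn
      simp [hn, (hmon.map _).leadingCoeff, ha1']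
    · have hn : (n : ZMod p) ≠ 0 := by rwa [Ne, ZMod.natCast_eq_zero_iff]
      rw [(hmodp _).mp (ha1.mpr hpn), ← coeff_zero_eq_eval_zero, coeff_scaleRoots, coeff_map,
        hP0]
      simp [hn]
  rw [hmodp]
  simp only [intDisc, Int.cast_mul, Int.cast_pow, Int.cast_neg, Int.cast_one, Int.cast_prod]
  rw [prod_congr rfl fun k hk' => by rw [hk k hk']]
  simp [h1]

theorem integral_coeffs_and_disc_coprime_general (n : ℕ) (hn : 2 ≤ n) (S : Finset ℕ)
    (a : ℕ → ℤ)
    (ha1 : Int.gcd (a 1) n = 1)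
    (ha1' : ((n : ℤ) - 1) ∣ a 1)
    (ha1'' : ∀ p ∈ S, ¬ p ∣ n → (p : ℤ) ∣ a 1)
    (hai : ∀ i, 2 ≤ i → i ≤ n - 1 → (n.factorial : ℤ) ∣ a i)
    (hai' : ∀ i, 2 ≤ i → i ≤ n - 1 → ∀ p ∈ S, (p : ℤ) ∣ a i) :
    (∀ m : ℕ, ∃ z : ℤ, (Pab ℚ n (fun i => (a i : ℚ)) 0).coeff m = (z : ℚ)) ∧
    ∃ z : ℤ, HasDisc n (fun i => (a i : ℚ)) 1 z ∧
      ∀ p : ℕ, p.Prime → (p ∈ S ∨ p ∣ n) → ¬ (p : ℤ) ∣ z := by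
  have hn0 : n ≠ 0 := by omega
  have hQ := dvd_coeff_intQ hn ha1' hai
  obtain ⟨P₀, hP₀, hP₀0⟩ := exists_derivative_eq_of_dvd_coeff (intQ n a) hQ 0
  obtain ⟨P₁, hP₁, hP₁0⟩ := exists_derivative_eq_of_dvd_coeff (intQ n a) hQ 1
  obtain ⟨hdeg, hmon⟩ := natDegree_eq_and_monic_of_derivative hn0
    (hP₁ ▸ natDegree_intQ hn a) (hP₁ ▸ leadingCoeff_intQ hn0 a)
  refine ⟨fun m => ⟨P₀.coeff m, ?_⟩, intDisc n a P₁, ?_, fun p hp hpS => ?_⟩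
  · have h := Pab_eq_map hn0 hP₀
    rw [hP₀0, Int.cast_zero] at h
    rw [h, coeff_map, eq_intCast]
  · simpa [hP₁0] using hasDisc_intDisc hn0 hP₁ hmon hdeg
  · have := Fact.mk hp
    have hak : ∀ k ∈ Icc 2 (n - 1), (p : ℤ) ∣ a k := fun k hk => by
      obtain ⟨hk2, hkn⟩ := mem_Icc.mp hk
      rcases hpS with hpS | hpn
      · exact hai' k hk2 hkn p hpS
      · have hpfac : (p : ℤ) ∣ n.factorial := Int.natCast_dvd_natCast.mpr
          (Nat.dvd_factorial hp.pos (Nat.le_of_dvd (by omega) hpn))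
        exact hpfac.trans (hai k hk2 hkn)
    have hpa1 : (p : ℤ) ∣ a 1 ↔ ¬ p ∣ n := by
      refine ⟨fun hpa hpn => ?_, fun hpn => ha1'' p (hpS.resolve_right hpn) hpn⟩
      have := Int.dvd_gcd hpa (Int.natCast_dvd_natCast.mpr hpn)
      rw [ha1] at this
      exact hp.not_dvd_one (by exact_mod_cast this)
    exact intDisc_not_dvd hmon hP₁0 hak hpa1

theorem integral_coeffs_and_disc_coprime (n : ℕ) (hn : 2 ≤ n) (S : Finset ℕ)
    (hS : ∀ p ∈ S, p.Prime) (a : ℕ → ℤ)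
    (ha1 : Int.gcd (a 1) n = 1)
    (ha1' : ((n : ℤ) - 1) ∣ a 1)
    (ha1'' : ∀ p ∈ S, ¬ p ∣ n → (p : ℤ) ∣ a 1)
    (hai : ∀ i, 2 ≤ i → i ≤ n - 1 → (n.factorial : ℤ) ∣ a i)
    (hai' : ∀ i, 2 ≤ i → i ≤ n - 1 → ∀ p ∈ S, (p : ℤ) ∣ a i) :
    (∀ m : ℕ, ∃ z : ℤ, (Pab ℚ n (fun i => (a i : ℚ)) 0).coeff m = (z : ℚ)) ∧
    ∃ z : ℤ, HasDisc n (fun i => (a i : ℚ)) 1 z ∧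
      ∀ p : ℕ, p.Prime → (p ∈ S ∨ p ∣ n) → ¬ (p : ℤ) ∣ z :=
  integral_coeffs_and_disc_coprime_general n hn S a ha1 ha1' ha1'' hai hai'
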